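/- arXiv:1904.03558 — 2 statements merged into one kernel-verified Lean document; each statement's English description precedes it below -/
import Mathlib

section
/- Let G be an acyclic transitive digraph on a finite vertex set V and let S ⊆ G be a 2-dimensional subgraph of G. Then the complement of S is transitively orientable, and for any transitive orientation H_S of the complement of S, setting H := H_S ∩ (complement of G), the digraph S' := G \ ucl(tcl(H)) is a 2-dimensional subgraph of G with S ⊆ S'. -/
/-- Undirected closure of a digraph: `E ∪ E⁻¹`. -/
def ucl {V : Type*} (E : V → V → Prop) : V → V → Prop := fun a b => E a b ∨ E b a

/-- Complement of a digraph: all pairs of distinct vertices not in `ucl E`. -/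
def cmpl {V : Type*} (E : V → V → Prop) : V → V → Prop := fun a b => a ≠ b ∧ ¬ ucl E a b

/-- A digraph is oriented iff `E ∩ E⁻¹ = ∅`. -/
def Oriented {V : Type*} (E : V → V → Prop) : Prop := ∀ a b, E a b → ¬ E b a

/-- `O` is an orientation of `E`: a maximal oriented subset of `E`. -/
def IsOrientation {V : Type*} (O E : V → V → Prop) : Prop :=
  (∀ a b, O a b → E a b) ∧ Oriented O ∧
    ∀ O' : V → V → Prop, (∀ a b, O' a b → E a b) → Oriented O' →
      (∀ a b, O a b → O' a b) → ∀ a b, O' a b → O a b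

/-- Transitivity of a digraph: `(a,b) ∈ E`, `(b,c) ∈ E` and `a ≠ c` imply `(a,c) ∈ E`. -/
def TransD {V : Type*} (E : V → V → Prop) : Prop :=
  ∀ a b c, E a b → E b c → a ≠ c → E a c

/-- Transitive closure of a digraph. -/
def tcl {V : Type*} (E : V → V → Prop) : V → V → Prop := Relation.TransGen E

/-- A digraph is acyclic iff its transitive closure is irreflexive. -/
def Acyclic {V : Type*} (E : V → V → Prop) : Prop := Irreflexive (tcl E)

/-- A transitive orientation of `E` is an orientation of `E` that is transitive. -/
def IsTransOrientation {V : Type*} (O E : V → V → Prop) : Prop :=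
  IsOrientation O E ∧ TransD O

/-- `E` is transitively orientable iff it has a transitive orientation. -/
def TransOrientable {V : Type*} (E : V → V → Prop) : Prop := ∃ O, IsTransOrientation O E

/-- `L` is a strict linear order on the vertex set. -/
def IsStrictLinear {V : Type*} (L : V → V → Prop) : Prop :=
  Irreflexive L ∧ Transitive L ∧ ∀ a b : V, a ≠ b → L a b ∨ L b a

/-- `E` is 2-dimensional: the intersection of two strict linear orders. -/
def TwoDim {V : Type*} (E : V → V → Prop) : Prop :=
  ∃ L₁ L₂ : V → V → Prop, IsStrictLinear L₁ ∧ IsStrictLinear L₂ ∧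
    ∀ a b, E a b ↔ L₁ a b ∧ L₂ a b

/-- Direct forcing `Γ` between edges of an undirected graph `E`:
`(a,b) Γ (c,d)` iff both are edges of `E` and either `a = c` with `b, d` non-adjacent,
or `b = d` with `a, c` non-adjacent. -/
def Forces {V : Type*} (E : V → V → Prop) (e f : V × V) : Prop :=
  E e.1 e.2 ∧ E f.1 f.2 ∧
    ((e.1 = f.1 ∧ e.2 ≠ f.2 ∧ ¬ E e.2 f.2) ∨ (e.2 = f.2 ∧ e.1 ≠ f.1 ∧ ¬ E e.1 f.1))

/-- `S` is a 2-dimensional subgraph of `G`: a subgraph that is a 2-dimensional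
acyclic transitive digraph. -/
def TwoDimSubgraph {V : Type*} (G S : V → V → Prop) : Prop :=
  (∀ a b, S a b → G a b) ∧ Irreflexive S ∧ TransD S ∧ Acyclic S ∧ TwoDim S

/-- A permutation graph: an undirected graph such that both it and its complement
are transitively orientable. -/
def PermGraph {V : Type*} (E : V → V → Prop) : Prop :=
  Irreflexive E ∧ (∀ a b, E a b → E b a) ∧ TransOrientable E ∧ TransOrientable (cmpl E)

/-- `S` is a permutation subgraph of `G`: an undirected subgraph of `G` that is a
permutation graph. -/
def PermSubgraph {V : Type*} (G S : V → V → Prop) : Prop :=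
  (∀ a b, S a b → G a b) ∧ PermGraph S

/-!
Write `K` for the transitive closure of `H = H_S ∩ cmpl G`. Since `H_S` is a transitive
orientation, `K ⊆ H_S` is a strict order, and since `H_S` orients every pair of vertices that
are incomparable in `S`, `K` relates every pair of vertices that are incomparable in `G`.
Then `S' ∪ K` and `S' ∪ K⁻¹` are strict linear orders with intersection `S'`. Their
transitivity rests on a mixing property: a `G`-edge `a → b` followed by a `K`-path `b → c`,
with no `K`-path `b → a`, yields a `K`-edge or a `G`-edge `a → c`.
Finally `S ⊆ S'` because `K ⊆ H_S` avoids the edges of `S`.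
-/

open Function Relation

section

variable {V : Type*}

theorem Acyclic.irreflexive {E : V → V → Prop} (h : Acyclic E) : Irreflexive E :=
  fun a haa => h a (TransGen.single haa)

theorem Acyclic.oriented {E : V → V → Prop} (h : Acyclic E) : Oriented E :=
  fun a _ hab hba => h a (TransGen.head hab (TransGen.single hba))

theorem Oriented.trans_of_transD {O : V → V → Prop} (hO : Oriented O) (htr : TransD O)
    {a b c : V} (hab : O a b) (hbc : O b c) : O a c := by
  by_cases hac : a = c
  · subst hac
    exact absurd hbc (hO a b hab)
  · exact htr a b c hab hbc hac

theorem tcl_le_of_trans {E O : V → V → Prop} (hO : ∀ {a b c}, O a b → O b c → O a c)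
    (hEO : ∀ a b, E a b → O a b) : ∀ a b, tcl E a b → O a b := by
  have : IsTrans V O := ⟨fun _ _ _ => hO⟩
  exact transGen_minimal hEO

theorem ucl_tcl_swap {E : V → V → Prop} {a b : V} :
    ucl (tcl (swap E)) a b ↔ ucl (tcl E) a b :=
  (transGen_swap.or transGen_swap).trans or_comm

theorem IsOrientation.total {O E : V → V → Prop} (hO : IsOrientation O E) {a b : V}
    (hab : E a b) (hne : a ≠ b) : O a b ∨ O b a := by
  obtain ⟨hOE, hOor, hOmax⟩ := hO
  by_contra! h
  refine h.1 (hOmax (fun x y => O x y ∨ (x = a ∧ y = b)) ?_ ?_ (fun _ _ => Or.inl) a b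
    (Or.inr ⟨rfl, rfl⟩))
  · rintro x y (hxy | ⟨rfl, rfl⟩)
    exacts [hOE x y hxy, hab]
  · rintro x y (hxy | ⟨rfl, rfl⟩) (hyx | ⟨hya, hxb⟩)
    · exact hOor x y hxy hyx
    · subst hya hxb
      exact h.2 hxy
    · exact h.2 hyx
    · exact hne hya.symm

theorem IsTransOrientation.tcl_le {O E F : V → V → Prop} (hO : IsTransOrientation O E)
    (hFO : ∀ a b, F a b → O a b) : ∀ a b, tcl F a b → O a b :=
  tcl_le_of_trans (hO.1.2.1.trans_of_transD hO.2) hFO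

/-- The transitive orientation of `cmpl S` takes the pairs on which the two linear orders
realising `S` disagree. -/
theorem TwoDim.transOrientable_cmpl {S : V → V → Prop} (hS : TwoDim S) :
    TransOrientable (cmpl S) := by
  obtain ⟨L₁, L₂, ⟨irr₁, tr₁, tot₁⟩, ⟨irr₂, tr₂, tot₂⟩, hS⟩ := hS
  refine ⟨fun a b => cmpl S a b ∧ L₁ a b ∧ L₂ b a, ⟨⟨fun a b h => h.1, ?_, ?_⟩, ?_⟩⟩
  · rintro a b ⟨-, hab, -⟩ ⟨-, hba, -⟩
    exact irr₁ a (tr₁ hab hba)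
  · intro O hOS hO hle a b hab
    obtain ⟨hne, hnS⟩ := hOS a b hab
    rcases tot₁ a b hne with h₁ | h₁ <;> rcases tot₂ a b hne with h₂ | h₂
    · exact absurd (Or.inl ((hS a b).2 ⟨h₁, h₂⟩)) hnS
    · exact ⟨⟨hne, hnS⟩, h₁, h₂⟩
    · exact absurd hab (hO b a (hle b a ⟨⟨hne.symm, fun h => hnS h.symm⟩, h₁, h₂⟩))
    · exact absurd (Or.inr ((hS b a).2 ⟨h₁, h₂⟩)) hnS
  · rintro a b c ⟨-, hab₁, hba₂⟩ ⟨-, hbc₁, hcb₂⟩ hne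
    refine ⟨⟨hne, ?_⟩, tr₁ hab₁ hbc₁, tr₂ hcb₂ hba₂⟩
    rintro (hac | hca)
    · exact irr₂ a (tr₂ ((hS a c).1 hac).2 (tr₂ hcb₂ hba₂))
    · exact irr₁ a (tr₁ (tr₁ hab₁ hbc₁) ((hS c a).1 hca).1)

theorem TwoDim.twoDimSubgraph {G E : V → V → Prop} (hE : TwoDim E)
    (hEG : ∀ a b, E a b → G a b) : TwoDimSubgraph G E := by
  obtain ⟨L₁, L₂, hL₁, hL₂, hE⟩ := hE
  have hirr : Irreflexive E := fun a haa => hL₁.1 a ((hE a a).1 haa).1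
  have htr : ∀ {a b c}, E a b → E b c → E a c := fun {a b c} hab hbc =>
    (hE a c).2 ⟨hL₁.2.1 ((hE a b).1 hab).1 ((hE b c).1 hbc).1,
      hL₂.2.1 ((hE a b).1 hab).2 ((hE b c).1 hbc).2⟩
  exact ⟨hEG, hirr, fun a b c hab hbc _ => htr hab hbc,
    fun a haa => hirr a (tcl_le_of_trans (E := E) (O := E) htr (fun _ _ hab => hab) a a haa),
    L₁, L₂, hL₁, hL₂, hE⟩

/-- The digraph `S' = G \ ucl K` of the theorem. -/
def pruned (G K : V → V → Prop) : V → V → Prop := fun a b => G a b ∧ ¬ ucl K a b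

theorem pruned_or_of_rel {G K : V → V → Prop} {a c : V} (hac : G a c) (hca : ¬ K c a) :
    pruned G K a c ∨ K a c := by
  by_cases hac' : K a c
  · exact Or.inr hac'
  · exact Or.inl ⟨hac, fun h' => h'.elim hac' hca⟩

/-- `H` generates a strict order that orients the incomparability graph of the strict
order `G`. -/
structure IncomparabilityOrder (G H : V → V → Prop) : Prop where
  irrefl : Irreflexive G
  trans : ∀ {a b c}, G a b → G b c → G a c
  incomparable : ∀ a b, H a b → ¬ G a b ∧ ¬ G b a
  acyclic : Acyclic H
  total : ∀ a b, a ≠ b → ¬ G a b → ¬ G b a → tcl H a b ∨ tcl H b a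

namespace IncomparabilityOrder

variable {G H : V → V → Prop} (h : IncomparabilityOrder G H)
include h

theorem swap_left : IncomparabilityOrder (swap G) H where
  irrefl := h.irrefl
  trans hab hbc := h.trans hbc hab
  incomparable a b hab := (h.incomparable a b hab).symm
  acyclic := h.acyclic
  total a b hne hab hba := h.total a b hne hba hab

theorem swap_right : IncomparabilityOrder G (swap H) where
  irrefl := h.irrefl
  trans := h.trans
  incomparable a b hab := (h.incomparable b a hab).symm
  acyclic a haa := h.acyclic a (transGen_swap.1 haa)
  total a b hne hab hba := (h.total a b hne hab hba).symm.imp transGen_swap.2 transGen_swap.2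

theorem rel_or_tcl_of_rel_of_step {a m c : V} (ham : G a m) (hmc : H m c) :
    G a c ∨ tcl H a c ∨ tcl H c a := by
  obtain ⟨-, hcm⟩ := h.incomparable m c hmc
  by_cases hac : G a c
  · exact Or.inl hac
  by_cases hca : G c a
  · exact absurd (h.trans hca ham) hcm
  have hne : a ≠ c := by
    rintro rfl
    exact hcm ham
  exact Or.inr (h.total a c hne hac hca)

theorem tcl_or_rel_of_rel_of_tcl {a b c : V} (hab : G a b) (hba : ¬ tcl H b a)
    (hbc : tcl H b c) : tcl H a c ∨ G a c := by
  suffices ∀ m, ReflTransGen H b m → tcl H a m ∨ G a m from this c hbc.to_reflTransGen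
  intro m hbm
  induction hbm with
  | refl => exact Or.inr hab
  | @tail m c hbm hmc ih =>
    rcases ih with ham | ham
    · exact Or.inl (TransGen.tail ham hmc)
    rcases h.rel_or_tcl_of_rel_of_step ham hmc with hac | hac | hca
    · exact Or.inr hac
    · exact Or.inl hac
    · exact absurd (TransGen.trans (TransGen.tail' hbm hmc) hca) hba

theorem tcl_or_rel_of_tcl_of_rel {a b c : V} (hab : tcl H a b) (hbc : G b c)
    (hcb : ¬ tcl H c b) : tcl H a c ∨ G a c :=
  (h.swap_left.swap_right.tcl_or_rel_of_rel_of_tcl hbc (mt transGen_swap.1 hcb)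
    (transGen_swap.2 hab)).imp_left transGen_swap.1

theorem isStrictLinear : IsStrictLinear (fun a b => pruned G (tcl H) a b ∨ tcl H a b) := by
  refine ⟨?_, ?_, ?_⟩
  · rintro a (⟨haa, -⟩ | haa)
    exacts [h.irrefl a haa, h.acyclic a haa]
  · rintro a b c (⟨hab, hnab⟩ | hab) (⟨hbc, hnbc⟩ | hbc)
    · refine pruned_or_of_rel (h.trans hab hbc) fun hca => ?_
      rcases h.tcl_or_rel_of_tcl_of_rel hca hab (fun hba => hnab (Or.inr hba)) with hcb | hcb
      exacts [hnbc (Or.inr hcb), h.irrefl c (h.trans hcb hbc)]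
    · rcases h.tcl_or_rel_of_rel_of_tcl hab (fun hba => hnab (Or.inr hba)) hbc with hac | hac
      · exact Or.inr hac
      · exact pruned_or_of_rel hac fun hca => hnab (Or.inr (TransGen.trans hbc hca))
    · rcases h.tcl_or_rel_of_tcl_of_rel hab hbc (fun hcb => hnbc (Or.inr hcb)) with hac | hac
      · exact Or.inr hac
      · exact pruned_or_of_rel hac fun hca => hnbc (Or.inr (TransGen.trans hca hab))
    · exact Or.inr (TransGen.trans hab hbc)
  · intro a b hne
    by_cases hab : G a b
    · by_cases hba : tcl H b a
      · exact Or.inr (Or.inr hba)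
      · exact Or.inl (pruned_or_of_rel hab hba)
    by_cases hba : G b a
    · by_cases hab' : tcl H a b
      · exact Or.inl (Or.inr hab')
      · exact Or.inr (pruned_or_of_rel hba hab')
    · exact (h.total a b hne hab hba).imp Or.inr Or.inr

theorem twoDim_pruned : TwoDim (pruned G (tcl H)) := by
  have hswap : ∀ a b, pruned G (tcl (swap H)) a b ↔ pruned G (tcl H) a b :=
    fun _ _ => and_congr_right' (not_congr ucl_tcl_swap)
  refine ⟨_, _, h.isStrictLinear, h.swap_right.isStrictLinear, fun a b => ⟨fun hab =>
    ⟨Or.inl hab, Or.inl ((hswap a b).2 hab)⟩, ?_⟩⟩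
  rintro ⟨hab | hab, hab' | hab'⟩
  · exact hab
  · exact hab
  · exact (hswap a b).1 hab'
  · exact absurd (TransGen.trans hab (transGen_swap.1 hab')) (h.acyclic a)

end IncomparabilityOrder

theorem IsTransOrientation.incomparabilityOrder {G S HS : V → V → Prop}
    (hGirr : Irreflexive G) (hGtr : ∀ {a b c}, G a b → G b c → G a c)
    (hSG : ∀ a b, S a b → G a b) (hHS : IsTransOrientation HS (cmpl S)) :
    IncomparabilityOrder G (fun x y => HS x y ∧ cmpl G x y) where
  irrefl := hGirr
  trans := @hGtr
  incomparable _ _ hab := ⟨fun h => hab.2.2 (Or.inl h), fun h => hab.2.2 (Or.inr h)⟩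
  acyclic a haa := by
    have hHSaa := hHS.tcl_le (fun _ _ h => h.1) a a haa
    exact hHS.1.2.1 a a hHSaa hHSaa
  total a b hne hab hba := by
    have hG : ¬ ucl G a b := fun h => h.elim hab hba
    have hS : cmpl S a b := ⟨hne, fun h => hG (h.imp (hSG a b) (hSG b a))⟩
    exact (hHS.1.total hS hne).imp (fun h => TransGen.single ⟨h, hne, hG⟩)
      (fun h => TransGen.single ⟨h, hne.symm, hG ∘ Or.symm⟩)

theorem IsTransOrientation.not_ucl_tcl {HS S F : V → V → Prop}
    (hHS : IsTransOrientation HS (cmpl S)) (hF : ∀ a b, F a b → HS a b) {a b : V}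
    (hab : S a b) : ¬ ucl (tcl F) a b := by
  rintro (hF_ab | hF_ba)
  · exact (hHS.1.1 a b (hHS.tcl_le hF a b hF_ab)).2 (Or.inl hab)
  · exact (hHS.1.1 b a (hHS.tcl_le hF b a hF_ba)).2 (Or.inr hab)

end

theorem improve_two_dimensional_subgraph_general
    {V : Type*} (G S : V → V → Prop)
    (hacyc : Acyclic G) (htrans : TransD G)
    (hS : TwoDimSubgraph G S) :
    TransOrientable (cmpl S) ∧
    ∀ HS : V → V → Prop, IsTransOrientation HS (cmpl S) →
      TwoDimSubgraph G
        (fun a b => G a b ∧ ¬ ucl (tcl (fun x y => HS x y ∧ cmpl G x y)) a b) ∧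
      ∀ a b, S a b →
        G a b ∧ ¬ ucl (tcl (fun x y => HS x y ∧ cmpl G x y)) a b := by
  obtain ⟨hSG, -, -, -, hSdim⟩ := hS
  refine ⟨hSdim.transOrientable_cmpl, fun HS hHS => ?_⟩
  have hord := hHS.incomparabilityOrder hacyc.irreflexive
    (hacyc.oriented.trans_of_transD htrans) hSG
  exact ⟨hord.twoDim_pruned.twoDimSubgraph fun _ _ hab => hab.1,
    fun a b hab => ⟨hSG a b hab, hHS.not_ucl_tcl (fun _ _ h => h.1) hab⟩⟩

theorem improve_two_dimensional_subgraph
    {V : Type*} [Fintype V] (G S : V → V → Prop)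
    (hirr : Irreflexive G) (hacyc : Acyclic G) (htrans : TransD G)
    (hS : TwoDimSubgraph G S) :
    TransOrientable (cmpl S) ∧
    ∀ HS : V → V → Prop, IsTransOrientation HS (cmpl S) →
      TwoDimSubgraph G
        (fun a b => G a b ∧ ¬ ucl (tcl (fun x y => HS x y ∧ cmpl G x y)) a b) ∧
      ∀ a b, S a b →
        G a b ∧ ¬ ucl (tcl (fun x y => HS x y ∧ cmpl G x y)) a b :=
  improve_two_dimensional_subgraph_general G S hacyc htrans hS
end

section
/- Let G be an acyclic transitive digraph on a finite vertex set V and let S be a locally maximal 2-dimensional subgraph of G, i.e., a 2-dimensional subgraph of G that is not strictly contained in any 2-dimensional subgraph of G. Then there exists an orientation H of the complement of G such that S = G \ ucl(tcl(H)). -/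
/-!
Write `S = L₁ ∩ L₂` and orient the complement of `G` along `L₁`: `H = cmpl G ∩ L₁`. Every
edge of `H` lies in `L₁` but, not being an edge of `S ⊆ G`, goes against `L₂`; hence so does
every edge of `Q = tcl H`, and `Q` misses `S` in both directions, i.e. `S ⊆ T := G \ ucl Q`.
Every pair of distinct vertices lies in `ucl T` or `ucl Q`, and `T` is transitive because an
`H`-path cannot join the ends of a `G`-path of length two. Hence `T ∪ Q` and `T ∪ Q⁻¹` are
strict linear orders with intersection `T`, so `T` is a 2-dimensional subgraph of `G`, and
maximality of `S` forces `S = T`.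
-/

open Relation

section

variable {V : Type*}

lemma tcl_le_of_le {H L : V → V → Prop} (hL : ∀ ⦃a b c⦄, L a b → L b c → L a c)
    (hHL : H ≤ L) : tcl H ≤ L :=
  haveI : IsTrans V L := ⟨hL⟩
  transGen_minimal hHL

lemma ucl_tcl_flip (H : V → V → Prop) (a b : V) : ucl (tcl (flip H)) a b ↔ ucl (tcl H) a b :=
  (or_congr transGen_swap transGen_swap).trans or_comm

lemma cmpl_symm (G : V → V → Prop) ⦃a b : V⦄ (h : cmpl G a b) : cmpl G b a :=
  ⟨h.1.symm, fun h' => h.2 h'.symm⟩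

lemma cmpl_irrefl (G : V → V → Prop) (a : V) : ¬ cmpl G a a :=
  fun h => h.1 rfl

lemma Acyclic.irrefl {G : V → V → Prop} (h : Acyclic G) (a : V) : ¬ G a a :=
  fun ha => h a (.single ha)

lemma Acyclic.asymm {G : V → V → Prop} (h : Acyclic G) {a b : V} (hab : G a b) : ¬ G b a :=
  fun hba => h a (.head hab (.single hba))

namespace IsStrictLinear

variable {L : V → V → Prop} (hL : IsStrictLinear L)
include hL

lemma asymm {a b : V} (hab : L a b) : ¬ L b a :=
  fun hba => hL.1 a (hL.2.1 hab hba)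

lemma isOrientation_inf {E : V → V → Prop} (hE : ∀ ⦃a b⦄, E a b → E b a) :
    IsOrientation (fun a b => E a b ∧ L a b) E := by
  refine ⟨fun _ _ h => h.1, fun a b hab hba => hL.asymm hab.2 hba.2, ?_⟩
  intro O hOE hO hle a b hab
  have hne : a ≠ b := by rintro rfl; exact hO a a hab hab
  rcases hL.2.2 a b hne with hLab | hLba
  · exact ⟨hOE a b hab, hLab⟩
  · exact absurd (hle b a ⟨hE (hOE a b hab), hLba⟩) (hO a b hab)

lemma ucl_inf_iff {E : V → V → Prop} (hE : ∀ ⦃a b⦄, E a b → E b a) (hEirr : ∀ a, ¬ E a a)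
    (a b : V) : ucl (fun a b => E a b ∧ L a b) a b ↔ E a b := by
  refine ⟨fun h => h.elim (·.1) (hE ·.1), fun hab => ?_⟩
  have hne : a ≠ b := by rintro rfl; exact hEirr a hab
  exact (hL.2.2 a b hne).imp (⟨hab, ·⟩) (⟨hE hab, ·⟩)

end IsStrictLinear

def remainder (G H : V → V → Prop) : V → V → Prop := fun a b => G a b ∧ ¬ ucl (tcl H) a b

section Remainder

variable {G H : V → V → Prop}

lemma remainder_flip : remainder G (flip H) = remainder G H := by
  funext a b
  simp only [remainder, ucl_tcl_flip]

lemma remainder_or_tcl_of_ne (hH : ∀ a b, ucl H a b ↔ cmpl G a b) {a b : V} (hab : a ≠ b) :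
    ucl (remainder G H) a b ∨ ucl (tcl H) a b := by
  by_cases hQ : ucl (tcl H) a b
  · exact .inr hQ
  by_cases hG : ucl G a b
  · exact .inl (hG.imp (⟨·, hQ⟩) (⟨·, fun h => hQ h.symm⟩))
  · exact absurd (((hH a b).2 ⟨hab, hG⟩).imp .single .single) hQ

/-- Induction on the `H`-path from `x` to `c`: its first edge `x → y` is a non-edge of `G`, so
by transitivity of `G` the vertex `y` is not a `G`-successor of `b`. -/
lemma not_remainder_of_tcl (htrans : TransD G) (hH : ∀ a b, ucl H a b ↔ cmpl G a b)
    {b c x : V} (hbc : remainder G H b c) (hxc : tcl H x c) : ¬ remainder G H x b := by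
  induction hxc using TransGen.head_induction_on with
  | single hxc =>
    have hxc' := (hH _ _).1 (.inl hxc)
    exact fun hxb => hxc'.2 (.inl (htrans _ _ _ hxb.1 hbc.1 hxc'.1))
  | @head x y hxy hyc ih =>
    intro hxb
    have hxy' := (hH _ _).1 (.inl hxy)
    have hby : b ≠ y := by rintro rfl; exact hxy'.2 (.inl hxb.1)
    rcases remainder_or_tcl_of_ne hH hby with (hby | hyb) | (hby | hyb)
    · exact hxy'.2 (.inl (htrans _ _ _ hxb.1 hby.1 hxy'.1))
    · exact ih hyb
    · exact hbc.2 (.inl (hby.trans hyc))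
    · exact hxb.2 (.inl (.head hxy hyb))

variable (hacyc : Acyclic G) (htrans : TransD G) (hH : ∀ a b, ucl H a b ↔ cmpl G a b)
include hacyc htrans hH

lemma remainder_trans ⦃a b c : V⦄ (hab : remainder G H a b) (hbc : remainder G H b c) :
    remainder G H a c := by
  refine ⟨htrans a b c hab.1 hbc.1 ?_, ?_⟩
  · rintro rfl
    exact hacyc.asymm hab.1 hbc.1
  rintro (hac | hca)
  · exact not_remainder_of_tcl htrans hH hbc hac hab
  · -- for the reversed orientation this is the first case, and the remainder is the same
    rw [← remainder_flip] at hab hbc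
    exact not_remainder_of_tcl htrans (fun a b => or_comm.trans (hH a b)) hbc
      (transGen_swap.2 hca) hab

lemma isStrictLinear_remainder_or_tcl (hHacyc : Acyclic H) :
    IsStrictLinear (fun a b => remainder G H a b ∨ tcl H a b) := by
  have hR := remainder_trans hacyc htrans hH
  refine ⟨?_, ?_, fun a b hab => ?_⟩
  · rintro a (h | h)
    exacts [hacyc.irrefl a h.1, hHacyc a h]
  · rintro a b c (hab | hab) (hbc | hbc)
    · exact .inl (hR hab hbc)
    · have hac : a ≠ c := by rintro rfl; exact hab.2 (.inr hbc)
      rcases remainder_or_tcl_of_ne hH hac with (hac | hca) | (hac | hca)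
      · exact .inl hac
      · exact absurd (.inr hbc) (hR hca hab).2
      · exact .inr hac
      · exact absurd (.inr (hbc.trans hca)) hab.2
    · have hac : a ≠ c := by rintro rfl; exact hbc.2 (.inr hab)
      rcases remainder_or_tcl_of_ne hH hac with (hac | hca) | (hac | hca)
      · exact .inl hac
      · exact absurd (.inr hab) (hR hbc hca).2
      · exact .inr hac
      · exact absurd (.inr (hca.trans hab)) hbc.2
    · exact .inr (hab.trans hbc)
  · rcases remainder_or_tcl_of_ne hH hab with (h | h) | (h | h)
    exacts [.inl (.inl h), .inr (.inl h), .inl (.inr h), .inr (.inr h)]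

lemma twoDimSubgraph_remainder (hHacyc : Acyclic H) : TwoDimSubgraph G (remainder G H) := by
  have hR := remainder_trans hacyc htrans hH
  have hL₂ : IsStrictLinear (fun a b => remainder G H a b ∨ tcl H b a) := by
    have hswap : ∀ a b, tcl (flip H) a b ↔ tcl H b a := fun _ _ => transGen_swap
    simpa only [remainder_flip, hswap] using
      isStrictLinear_remainder_or_tcl (H := flip H) hacyc htrans
        (fun a b => or_comm.trans (hH a b)) (fun a h => hHacyc a (transGen_swap.1 h))
  have : IsTrans V (remainder G H) := ⟨hR⟩
  refine ⟨fun _ _ h => h.1, fun a h => hacyc.irrefl a h.1, fun _ _ _ hab hbc _ => hR hab hbc,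
    ?_, _, _, isStrictLinear_remainder_or_tcl hacyc htrans hH hHacyc, hL₂, fun a b => ?_⟩
  · rw [Acyclic, tcl, transGen_eq_self]
    exact fun a h => hacyc.irrefl a h.1
  refine ⟨fun h => ⟨.inl h, .inl h⟩, ?_⟩
  rintro ⟨hab | hab, hab' | hba⟩
  exacts [hab, hab, hab', absurd (hab.trans hba) (hHacyc a)]

end Remainder

end

theorem maximal_two_dimensional_subgraph_is_induced_general
    {V : Type*} (G S : V → V → Prop)
    (hacyc : Acyclic G) (htrans : TransD G)
    (hS : TwoDimSubgraph G S)
    (hmax : ∀ S' : V → V → Prop, TwoDimSubgraph G S' →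
      (∀ a b, S a b → S' a b) → ∀ a b, S' a b → S a b) :
    ∃ H : V → V → Prop, IsOrientation H (cmpl G) ∧
      ∀ a b, S a b ↔ G a b ∧ ¬ ucl (tcl H) a b := by
  obtain ⟨hSG, -, -, -, L₁, L₂, hL₁, hL₂, hSL⟩ := hS
  set H : V → V → Prop := fun a b => cmpl G a b ∧ L₁ a b
  have hHL₁ : tcl H ≤ L₁ := tcl_le_of_le hL₁.2.1 fun _ _ h => h.2
  have hHL₂ : tcl H ≤ flip L₂ := tcl_le_of_le (fun _ _ _ h₁ h₂ => hL₂.2.1 h₂ h₁) fun a b h =>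
    (hL₂.2.2 a b h.1.1).resolve_left fun h₂ =>
      h.1.2 (.inl (hSG a b ((hSL a b).2 ⟨h.2, h₂⟩)))
  have hS_le : ∀ a b, S a b → remainder G H a b := fun a b h => by
    obtain ⟨h₁, h₂⟩ := (hSL a b).1 h
    refine ⟨hSG a b h, ?_⟩
    rintro (hab | hba)
    exacts [hL₂.asymm h₂ (hHL₂ a b hab), hL₁.asymm h₁ (hHL₁ b a hba)]
  have hH : ∀ a b, ucl H a b ↔ cmpl G a b := hL₁.ucl_inf_iff (cmpl_symm G) (cmpl_irrefl G)
  have hHacyc : Acyclic H := fun a h => hL₁.1 a (hHL₁ a a h)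
  exact ⟨H, hL₁.isOrientation_inf (cmpl_symm G), fun a b =>
    ⟨hS_le a b, hmax _ (twoDimSubgraph_remainder hacyc htrans hH hHacyc) hS_le a b⟩⟩

theorem maximal_two_dimensional_subgraph_is_induced
    {V : Type*} [Fintype V] (G S : V → V → Prop)
    (hirr : Irreflexive G) (hacyc : Acyclic G) (htrans : TransD G)
    (hS : TwoDimSubgraph G S)
    (hmax : ∀ S' : V → V → Prop, TwoDimSubgraph G S' →
      (∀ a b, S a b → S' a b) → ∀ a b, S' a b → S a b) :
    ∃ H : V → V → Prop, IsOrientation H (cmpl G) ∧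
      ∀ a b, S a b ↔ G a b ∧ ¬ ucl (tcl H) a b :=
  maximal_two_dimensional_subgraph_is_induced_general G S hacyc htrans hS hmax
end
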